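/- arXiv:2602.22749 — 3 statements merged into one kernel-verified Lean document; each statement's English description precedes it below -/
import Mathlib

section
/- For smooth f, g : ℝ^{1+3} → ℝ on the region t > r, the null form admits the decomposition Q₀(f,g) = −(s/t)²(∂ₜf)(∂ₜg) + Σₐ (t^{-1}Lₐf)(t^{-1}Lₐg) − (xₐ/t)(∂ₜf)(t^{-1}Lₐg) − (xₐ/t)(∂ₜg)(t^{-1}Lₐf), where s² = t² − r², Lₐ = xₐ∂ₜ + t∂ₐ, and summation over a = 1,2,3 is understood. -/
noncomputable def pt (f : ℝ → (Fin 3 → ℝ) → ℝ) : ℝ → (Fin 3 → ℝ) → ℝ :=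
  fun t x => deriv (fun s => f s x) t

noncomputable def px (a : Fin 3) (f : ℝ → (Fin 3 → ℝ) → ℝ) : ℝ → (Fin 3 → ℝ) → ℝ :=
  fun t x => deriv (fun s => f t (Function.update x a s)) (x a)

noncomputable def Q0 (f g : ℝ → (Fin 3 → ℝ) → ℝ) : ℝ → (Fin 3 → ℝ) → ℝ :=
  fun t x => - pt f t x * pt g t x + ∑ a : Fin 3, px a f t x * px a g t x

noncomputable def Lop (a : Fin 3) (f : ℝ → (Fin 3 → ℝ) → ℝ) : ℝ → (Fin 3 → ℝ) → ℝ :=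
  fun t x => x a * pt f t x + t * px a f t x

/-!
Since `Lₐ = xₐ∂ₜ + t∂ₐ`, one has `∂ₐ = t⁻¹Lₐ − (xₐ/t)∂ₜ` wherever `t ≠ 0`. Substituting this into
`Σₐ ∂ₐf ∂ₐg` and expanding, the terms quadratic in `xₐ/t` add up to `(r/t)² ∂ₜf ∂ₜg`, which combines
with `−∂ₜf ∂ₜg` into `−(s/t)² ∂ₜf ∂ₜg`. The identity is pointwise algebra in the values of the
derivatives at `(t, x)`, so no smoothness is involved.
-/

open Finset

/-- The null-form decomposition at one point, with `u, v` standing for `∂ₜf, ∂ₜg` and `p a, q a`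
for `∂ₐf, ∂ₐg`. -/
theorem nullForm_decomposition_pointwise {K ι : Type*} [Field K] [Fintype ι] {t : K} (ht : t ≠ 0)
    (x p q : ι → K) (u v : K) :
    -u * v + ∑ a, p a * q a =
      -((t ^ 2 - ∑ a, x a ^ 2) / t ^ 2) * (u * v)
      + ∑ a, (t⁻¹ * (x a * u + t * p a)) * (t⁻¹ * (x a * v + t * q a))
      - ∑ a, (x a / t) * u * (t⁻¹ * (x a * v + t * q a))
      - ∑ a, (x a / t) * v * (t⁻¹ * (x a * u + t * p a)) := by
  have summand : ∀ a, (t⁻¹ * (x a * u + t * p a)) * (t⁻¹ * (x a * v + t * q a))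
      - (x a / t) * u * (t⁻¹ * (x a * v + t * q a))
      - (x a / t) * v * (t⁻¹ * (x a * u + t * p a)) = p a * q a - x a ^ 2 / t ^ 2 * (u * v) := by
    intro a
    field_simp
    ring
  rw [add_sub_assoc, add_sub_assoc, ← sum_sub_distrib, ← sum_sub_distrib,
    sum_congr rfl fun a _ => summand a, sum_sub_distrib, ← sum_mul, ← sum_div]
  field_simp
  ring

/-- Decomposition of the null form inside the light cone t > r, with s² = t² − r²:
Q₀(f,g) = −(s/t)²∂ₜf∂ₜg + Σₐ(t⁻¹Lₐf)(t⁻¹Lₐg) − Σₐ(xₐ/t)∂ₜf(t⁻¹Lₐg) − Σₐ(xₐ/t)∂ₜg(t⁻¹Lₐf). -/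
theorem stmt4 (f g : ℝ → (Fin 3 → ℝ) → ℝ) (t : ℝ) (x : Fin 3 → ℝ)
    (ht : Real.sqrt (∑ a : Fin 3, x a ^ 2) < t) :
    Q0 f g t x =
      - ((t ^ 2 - ∑ a : Fin 3, x a ^ 2) / t ^ 2) * (pt f t x * pt g t x)
      + ∑ a : Fin 3, (t⁻¹ * Lop a f t x) * (t⁻¹ * Lop a g t x)
      - ∑ a : Fin 3, (x a / t) * pt f t x * (t⁻¹ * Lop a g t x)
      - ∑ a : Fin 3, (x a / t) * pt g t x * (t⁻¹ * Lop a f t x) := by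
  have ht0 : t ≠ 0 := (ht.trans_le' (Real.sqrt_nonneg _)).ne'
  exact nullForm_decomposition_pointwise ht0 x (fun a => px a f t x) (fun a => px a g t x) _ _
end

section
/- Fix ℓ ∈ ℕ. For 0 < a, define D_ℓ(a) = ∫_a^∞ (z−a)^ℓ / (z^{ℓ+1}(1+z/2)^{ℓ+1}) dz. Then there exist constants c, C > 0 depending only on ℓ such that: (i) D_ℓ(a) ≥ c ln(1/a) for 0 < a ≤ 1/2, and D_ℓ(a) ≤ C(1 + ln(1/a)) for 0 < a ≤ 1; (ii) for a ≥ 2, c a^{−ℓ−1} ≤ D_ℓ(a) ≤ C a^{−ℓ−1}. -/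
/-- D_ℓ(a) = ∫_a^∞ (z−a)^ℓ / (z^{ℓ+1}(1+z/2)^{ℓ+1}) dz. -/
noncomputable def Dl (ℓ : ℕ) (a : ℝ) : ℝ :=
  ∫ z in Set.Ioi a, (z - a) ^ ℓ / (z ^ (ℓ + 1) * (1 + z / 2) ^ (ℓ + 1))

open MeasureTheory Set Real

namespace Stmt9Aux

variable (ℓ : ℕ)

noncomputable def f (ℓ : ℕ) (a : ℝ) : ℝ → ℝ :=
  fun z => (z - a) ^ ℓ / (z ^ (ℓ + 1) * (1 + z / 2) ^ (ℓ + 1))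

lemma f_nonneg {a z : ℝ} (ha : 0 ≤ a) (hz : a < z) : 0 ≤ f ℓ a z := by
  have hz0 : 0 < z := lt_of_le_of_lt ha hz
  exact div_nonneg (pow_nonneg (by linarith) _) (by positivity)

lemma f_le_g {a z : ℝ} (ha : 0 ≤ a) (hz : a < z) :
    f ℓ a z ≤ 2 ^ (ℓ + 1) * (z ^ (ℓ + 2))⁻¹ := by
  have hz0 : 0 < z := lt_of_le_of_lt ha hz
  have h1 : (z - a) ^ ℓ ≤ z ^ ℓ := pow_le_pow_left₀ (by linarith) (by linarith) ℓ
  have hden : z ^ (ℓ + 1) * (z / 2) ^ (ℓ + 1) ≤ z ^ (ℓ + 1) * (1 + z / 2) ^ (ℓ + 1) := by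
    refine mul_le_mul_of_nonneg_left (pow_le_pow_left₀ (by positivity) (by linarith) _)
      (by positivity)
  have key : f ℓ a z ≤ z ^ ℓ / (z ^ (ℓ + 1) * (z / 2) ^ (ℓ + 1)) :=
    div_le_div₀ (by positivity) h1 (by positivity) hden
  have : z ^ ℓ / (z ^ (ℓ + 1) * (z / 2) ^ (ℓ + 1)) = 2 ^ (ℓ + 1) * (z ^ (ℓ + 2))⁻¹ := by
    rw [div_pow]
    field_simp
    ring
  linarith [key, this.le, this.ge]

lemma g_integrable {a : ℝ} (ha : 0 < a) :
    IntegrableOn (fun z : ℝ => (2 : ℝ) ^ (ℓ + 1) * (z ^ (ℓ + 2))⁻¹) (Ioi a) := by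
  have hexp : -(ℓ + 2 : ℝ) < -1 := by
    have : (0 : ℝ) ≤ ℓ := Nat.cast_nonneg ℓ
    linarith
  have h := (integrableOn_Ioi_rpow_of_lt hexp ha)
  have h2 : IntegrableOn (fun z : ℝ => (z ^ (ℓ + 2))⁻¹) (Ioi a) := by
    refine h.congr_fun (fun x hx => ?_) measurableSet_Ioi
    have hx0 : 0 < x := ha.trans hx
    rw [← Real.rpow_natCast x (ℓ + 2), ← Real.rpow_neg hx0.le]
    push_cast
    ring_nf
  exact h2.const_mul _

lemma g_integral {a : ℝ} (ha : 0 < a) :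
    ∫ z in Ioi a, (2 : ℝ) ^ (ℓ + 1) * (z ^ (ℓ + 2))⁻¹
      = 2 ^ (ℓ + 1) * ((a ^ (ℓ + 1))⁻¹ / (ℓ + 1)) := by
  have hexp : -(ℓ + 2 : ℝ) < -1 := by
    have : (0 : ℝ) ≤ ℓ := Nat.cast_nonneg ℓ
    linarith
  rw [MeasureTheory.integral_const_mul]
  congr 1
  have hcong : ∫ z in Ioi a, (z ^ (ℓ + 2) : ℝ)⁻¹ = ∫ z in Ioi a, z ^ (-(ℓ + 2 : ℝ)) := by
    refine setIntegral_congr_fun measurableSet_Ioi (fun x hx => ?_)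
    have hx0 : 0 < x := ha.trans hx
    rw [← Real.rpow_natCast x (ℓ + 2), ← Real.rpow_neg hx0.le]
    push_cast
    ring_nf
  rw [hcong, integral_Ioi_rpow_of_lt hexp ha]
  have hne : (-(ℓ + 2 : ℝ) + 1) = -((ℓ : ℝ) + 1) := by ring
  rw [hne]
  rw [Real.rpow_neg ha.le, ← Real.rpow_natCast a (ℓ + 1)]
  push_cast
  rw [neg_div_neg_eq]

lemma f_integrable {a : ℝ} (ha : 0 < a) : IntegrableOn (f ℓ a) (Ioi a) := by
  refine (g_integrable ℓ ha).mono' ?_ ?_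
  · apply Measurable.aestronglyMeasurable
    unfold f
    fun_prop
  · filter_upwards [ae_restrict_mem measurableSet_Ioi] with z hz
    rw [Real.norm_eq_abs, abs_of_nonneg (f_nonneg ℓ ha.le hz)]
    exact f_le_g ℓ ha.le hz

end Stmt9Aux

open Stmt9Aux

/-- Asymptotics of D_ℓ: for a ≤ 1/2, D_ℓ(a) ≥ c ln(1/a); for 0 < a ≤ 1,
D_ℓ(a) ≤ C(1 + ln(1/a)); for a ≥ 2, c a^{−ℓ−1} ≤ D_ℓ(a) ≤ C a^{−ℓ−1}. -/
theorem stmt9 (ℓ : ℕ) :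
    ∃ c > (0 : ℝ), ∃ C > (0 : ℝ),
      (∀ a : ℝ, 0 < a → a ≤ 1 / 2 → c * Real.log (1 / a) ≤ Dl ℓ a) ∧
      (∀ a : ℝ, 0 < a → a ≤ 1 → Dl ℓ a ≤ C * (1 + Real.log (1 / a))) ∧
      (∀ a : ℝ, 2 ≤ a → c / a ^ (ℓ + 1) ≤ Dl ℓ a ∧ Dl ℓ a ≤ C / a ^ (ℓ + 1)) := by
  have hDl : ∀ a : ℝ, Dl ℓ a = ∫ z in Set.Ioi a, f ℓ a z := fun a => rfl
  set c₁ : ℝ := (2 ^ (2 * ℓ + 1) : ℝ)⁻¹ with hc₁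
  set c₂ : ℝ := ((2 : ℝ) ^ ℓ * 3 ^ (ℓ + 2))⁻¹ with hc₂
  refine ⟨min c₁ c₂, by positivity, 2 ^ (ℓ + 1), by positivity, ?_, ?_, ?_⟩
  · -- lower bound for a ≤ 1/2
    intro a ha ha2
    have hlog : 0 ≤ Real.log (1 / a) := by
      apply Real.log_nonneg
      rw [le_div_iff₀ ha]; linarith
    have h2a2 : 2 * a ≤ 2 := by linarith
    have hsub : Ioc (2 * a) 2 ⊆ Ioi a := fun z hz => lt_of_le_of_lt (by linarith) hz.1
    have hint_inv : IntegrableOn (fun z : ℝ => c₁ * z⁻¹) (Ioc (2 * a) 2) := by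
      apply (ContinuousOn.integrableOn_compact isCompact_Icc ?_).mono_set Ioc_subset_Icc_self
      exact continuousOn_const.mul (ContinuousOn.inv₀ continuousOn_id
        (fun x hx => ne_of_gt (lt_of_lt_of_le (by linarith) hx.1)))
    have hpt : ∀ z ∈ Ioc (2 * a) 2, c₁ * z⁻¹ ≤ f ℓ a z := by
      intro z hz
      have hz0 : 0 < z := lt_trans (by linarith) hz.1
      have hzne : z ≠ 0 := hz0.ne'
      have heq : c₁ * z⁻¹ = (z / 2) ^ ℓ / (z ^ (ℓ + 1) * 2 ^ (ℓ + 1)) := by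
        rw [hc₁, div_pow]; field_simp; ring
      rw [heq]
      have haz : a < z := hsub hz
      refine div_le_div₀ (pow_nonneg (by linarith) _)
        (pow_le_pow_left₀ (by positivity) (by nlinarith [hz.1]) ℓ) (by positivity)
        (mul_le_mul_of_nonneg_left (pow_le_pow_left₀ (by positivity) (by nlinarith [hz.2]) _)
          (by positivity))
    have hmono1 : ∫ z in Ioc (2 * a) 2, c₁ * z⁻¹ ≤ ∫ z in Ioc (2 * a) 2, f ℓ a z :=
      setIntegral_mono_on hint_inv ((f_integrable ℓ ha).mono_set hsub) measurableSet_Ioc hpt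
    have hmono2 : ∫ z in Ioc (2 * a) 2, f ℓ a z ≤ ∫ z in Ioi a, f ℓ a z := by
      refine setIntegral_mono_set (f_integrable ℓ ha) ?_ (HasSubset.Subset.eventuallyLE hsub)
      filter_upwards [ae_restrict_mem measurableSet_Ioi] with z hz
      exact f_nonneg ℓ ha.le hz
    have hval : ∫ z in Ioc (2 * a) 2, c₁ * z⁻¹ = c₁ * Real.log (1 / a) := by
      rw [← intervalIntegral.integral_of_le h2a2, intervalIntegral.integral_const_mul]
      congr 1
      rw [integral_inv (Set.notMem_uIcc_of_lt (by linarith) (by norm_num))]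
      congr 1
      field_simp
    have hmin : min c₁ c₂ * Real.log (1 / a) ≤ c₁ * Real.log (1 / a) :=
      mul_le_mul_of_nonneg_right (min_le_left _ _) hlog
    rw [hDl a]
    linarith [hval, hmono1, hmono2, hmin]
  · -- upper bound for 0 < a ≤ 1
    intro a ha ha1
    have hlog : 0 ≤ Real.log (1 / a) := by
      apply Real.log_nonneg
      rw [le_div_iff₀ ha]; linarith
    have hsplit : Ioc a 1 ∪ Ioi (1 : ℝ) = Ioi a := Ioc_union_Ioi_eq_Ioi ha1
    have hf := f_integrable ℓ ha
    have hf1 : IntegrableOn (f ℓ a) (Ioc a 1) :=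
      hf.mono_set (by rw [← hsplit]; exact subset_union_left)
    have hf2 : IntegrableOn (f ℓ a) (Ioi 1) :=
      hf.mono_set (by rw [← hsplit]; exact subset_union_right)
    have hDsum : Dl ℓ a = (∫ z in Ioc a 1, f ℓ a z) + ∫ z in Ioi 1, f ℓ a z := by
      rw [hDl a, ← hsplit,
        setIntegral_union (Ioc_disjoint_Ioi le_rfl) measurableSet_Ioi hf1 hf2]
    have hint_inv : IntegrableOn (fun z : ℝ => z⁻¹) (Ioc a 1) := by
      apply (ContinuousOn.integrableOn_compact isCompact_Icc ?_).mono_set Ioc_subset_Icc_self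
      exact ContinuousOn.inv₀ continuousOn_id (fun x hx => ne_of_gt (lt_of_lt_of_le ha hx.1))
    have hb1 : ∫ z in Ioc a 1, f ℓ a z ≤ ∫ z in Ioc a 1, z⁻¹ := by
      refine setIntegral_mono_on hf1 hint_inv measurableSet_Ioc (fun z hz => ?_)
      have hz0 : 0 < z := lt_trans ha hz.1
      have heq : z ^ ℓ / (z ^ (ℓ + 1) * 1) = z⁻¹ := by
        field_simp [pow_succ]
        ring
      calc f ℓ a z ≤ z ^ ℓ / (z ^ (ℓ + 1) * 1) := by
            refine div_le_div₀ (pow_nonneg hz0.le ℓ)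
              (pow_le_pow_left₀ (by linarith [hz.1]) (by linarith [hz.1]) ℓ) (by positivity)
              (mul_le_mul_of_nonneg_left (one_le_pow₀ (by linarith)) (by positivity))
        _ = z⁻¹ := heq
    have hval1 : ∫ z in Ioc a 1, (z : ℝ)⁻¹ = Real.log (1 / a) := by
      rw [← intervalIntegral.integral_of_le ha1,
        integral_inv (Set.notMem_uIcc_of_lt ha (by norm_num))]
    have hb2 : ∫ z in Ioi (1 : ℝ), f ℓ a z ≤ 2 ^ (ℓ + 1) := by
      have := setIntegral_mono_on hf2 (g_integrable ℓ one_pos) measurableSet_Ioi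
        (fun z hz => f_le_g ℓ ha.le (lt_of_le_of_lt ha1 hz))
      rw [g_integral ℓ one_pos] at this
      have hL1 : (1 : ℝ) ≤ (ℓ : ℝ) + 1 := by
        have : (0 : ℝ) ≤ ℓ := Nat.cast_nonneg ℓ
        linarith
      have h2 : ((1 : ℝ) ^ (ℓ + 1))⁻¹ / ((ℓ : ℝ) + 1) ≤ 1 := by
        rw [one_pow, inv_one]
        exact div_le_one_of_le₀ hL1 (by linarith)
      nlinarith [this, pow_pos (by norm_num : (0:ℝ) < 2) (ℓ + 1)]
    have hC1 : (1 : ℝ) ≤ 2 ^ (ℓ + 1) := one_le_pow₀ (by norm_num)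
    rw [hDsum]
    nlinarith [hb1, hval1, hb2, hlog, hC1]
  · -- a ≥ 2
    intro a ha
    have ha0 : (0 : ℝ) < a := by linarith
    constructor
    · -- lower bound
      set c₂' : ℝ := ((2 : ℝ) ^ ℓ * (3 * a) ^ (ℓ + 2))⁻¹ with hc₂'
      have hsub : Ioc (2 * a) (3 * a) ⊆ Ioi a := fun z hz => lt_of_le_of_lt (by linarith) hz.1
      have hconst : IntegrableOn (fun _ : ℝ => c₂') (Ioc (2 * a) (3 * a)) :=
        integrableOn_const measure_Ioc_lt_top.ne
      have hpt : ∀ z ∈ Ioc (2 * a) (3 * a), c₂' ≤ f ℓ a z := by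
        intro z hz
        have hz4 : (4 : ℝ) ≤ z := by nlinarith [hz.1]
        have hz0 : 0 < z := by linarith
        have hzne : z ≠ 0 := hz0.ne'
        have step1 : c₂' ≤ ((2 : ℝ) ^ ℓ * z ^ (ℓ + 2))⁻¹ := by
          rw [hc₂']
          exact inv_anti₀ (by positivity)
            (mul_le_mul_of_nonneg_left (pow_le_pow_left₀ hz0.le hz.2 _) (by positivity))
        have step2 : ((2 : ℝ) ^ ℓ * z ^ (ℓ + 2))⁻¹
            = (z / 2) ^ ℓ / (z ^ (ℓ + 1) * z ^ (ℓ + 1)) := by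
          rw [div_pow]
          field_simp
          ring
        have step3 : (z / 2) ^ ℓ / (z ^ (ℓ + 1) * z ^ (ℓ + 1)) ≤ f ℓ a z := by
          refine div_le_div₀ (pow_nonneg (by nlinarith [hz.1]) _)
            (pow_le_pow_left₀ (by positivity) (by nlinarith [hz.1]) ℓ) (by positivity)
            (mul_le_mul_of_nonneg_left (pow_le_pow_left₀ (by linarith) (by linarith) _)
              (by positivity))
        linarith [step1, step2.le, step2.ge, step3]
      have hmono1 : ∫ _ in Ioc (2 * a) (3 * a), c₂' ≤ ∫ z in Ioc (2 * a) (3 * a), f ℓ a z :=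
        setIntegral_mono_on hconst ((f_integrable ℓ ha0).mono_set hsub) measurableSet_Ioc hpt
      have hmono2 : ∫ z in Ioc (2 * a) (3 * a), f ℓ a z ≤ ∫ z in Ioi a, f ℓ a z := by
        refine setIntegral_mono_set (f_integrable ℓ ha0) ?_ (HasSubset.Subset.eventuallyLE hsub)
        filter_upwards [ae_restrict_mem measurableSet_Ioi] with z hz
        exact f_nonneg ℓ ha0.le hz
      have hval : ∫ _ in Ioc (2 * a) (3 * a), c₂' = a * c₂' := by
        rw [setIntegral_const, Real.volume_real_Ioc_of_le (by linarith), smul_eq_mul]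
        congr 1
        ring
      have heq : c₂ / a ^ (ℓ + 1) = a * c₂' := by
        rw [hc₂, hc₂']
        have hane : a ≠ 0 := ha0.ne'
        rw [mul_pow]
        field_simp
        ring
      have hle : min c₁ c₂ / a ^ (ℓ + 1) ≤ c₂ / a ^ (ℓ + 1) := by
        gcongr
        exact min_le_right _ _
      rw [hDl a]
      linarith [hval, hmono1, hmono2, hle, heq.le, heq.ge]
    · -- upper bound
      have hb : Dl ℓ a ≤ ∫ z in Ioi a, (2 : ℝ) ^ (ℓ + 1) * (z ^ (ℓ + 2))⁻¹ := by
        rw [hDl a]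
        exact setIntegral_mono_on (f_integrable ℓ ha0) (g_integrable ℓ ha0) measurableSet_Ioi
          (fun z hz => f_le_g ℓ ha0.le hz)
      rw [g_integral ℓ ha0] at hb
      have hL1 : (1 : ℝ) ≤ (ℓ : ℝ) + 1 := by
        have : (0 : ℝ) ≤ ℓ := Nat.cast_nonneg ℓ
        linarith
      have h2 : (2 : ℝ) ^ (ℓ + 1) * ((a ^ (ℓ + 1))⁻¹ / ((ℓ : ℝ) + 1))
          ≤ 2 ^ (ℓ + 1) / a ^ (ℓ + 1) := by
        rw [div_eq_mul_inv ((2 : ℝ) ^ (ℓ + 1))]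
        exact mul_le_mul_of_nonneg_left (div_le_self (by positivity) hL1) (by positivity)
      linarith
end

section
/- Let Φ = rφ, Ψ = rψ, and X(Φ,Ψ) = UΦ − (ln v)(∂ₜΨ)², where (φ,ψ) are smooth and Ψ satisfies UVΨ = r^{-2}Δ_{S²}Ψ + rQ₀(φ,φ) and Φ satisfies UVΦ = r^{-2}Δ_{S²}Φ + r^{-1}(∂ₜΨ)². Then the identity V[X(Φ,Ψ)] = (u/(rv))(∂ₜΨ)² − (ln v / r²)(∂ₜΨ)(Δ_{S²}Ψ) + r^{-2}Δ_{S²}Φ − (ln v)(∂ₜΨ)(rQ₀(φ,φ) + VVΨ) holds pointwise, where U = ∂ₜ−∂ᵣ, V = ∂ₜ+∂ᵣ, u = t−r, v = t+r. -/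
/-- ∂ₜ for a function of (t, r) (fixed angle). -/
noncomputable def PT (f : ℝ → ℝ → ℝ) : ℝ → ℝ → ℝ := fun t r => deriv (fun s => f s r) t

/-- ∂ᵣ for a function of (t, r). -/
noncomputable def PR (f : ℝ → ℝ → ℝ) : ℝ → ℝ → ℝ := fun t r => deriv (fun ρ => f t ρ) r

/-- U = ∂ₜ − ∂ᵣ. -/
noncomputable def Uop (f : ℝ → ℝ → ℝ) : ℝ → ℝ → ℝ := fun t r => PT f t r - PR f t r

/-- V = ∂ₜ + ∂ᵣ. -/
noncomputable def Vop (f : ℝ → ℝ → ℝ) : ℝ → ℝ → ℝ := fun t r => PT f t r + PR f t r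

private lemma hasDerivAt_fst {F : ℝ × ℝ → ℝ} (hF : ContDiff ℝ (⊤ : ℕ∞) F) (t r : ℝ) :
    HasDerivAt (fun s => F (s, r)) (fderiv ℝ F (t, r) (1, 0)) t := by
  have h1 : HasDerivAt (fun s : ℝ => (s, r)) ((1 : ℝ), (0 : ℝ)) t :=
    (hasDerivAt_id t).prodMk (hasDerivAt_const t r)
  exact (hF.differentiable (by simp) (t, r)).hasFDerivAt.comp_hasDerivAt t h1

private lemma hasDerivAt_snd {F : ℝ × ℝ → ℝ} (hF : ContDiff ℝ (⊤ : ℕ∞) F) (t r : ℝ) :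
    HasDerivAt (fun ρ => F (t, ρ)) (fderiv ℝ F (t, r) (0, 1)) r := by
  have h1 : HasDerivAt (fun ρ : ℝ => (t, ρ)) ((0 : ℝ), (1 : ℝ)) r :=
    (hasDerivAt_const r t).prodMk (hasDerivAt_id r)
  exact (hF.differentiable (by simp) (t, r)).hasFDerivAt.comp_hasDerivAt r h1

private lemma smoothD {F : ℝ × ℝ → ℝ} (hF : ContDiff ℝ (⊤ : ℕ∞) F) (w : ℝ × ℝ) :
    ContDiff ℝ (⊤ : ℕ∞) (fun p => fderiv ℝ F p w) :=
  (hF.fderiv_right (by simp)).clm_apply contDiff_const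

private lemma Hsym {F : ℝ × ℝ → ℝ} (hF : ContDiff ℝ (⊤ : ℕ∞) F) (q w z : ℝ × ℝ) :
    fderiv ℝ (fun p => fderiv ℝ F p w) q z = fderiv ℝ (fun p => fderiv ℝ F p z) q w := by
  have hd : Differentiable ℝ (fderiv ℝ F) := (hF.fderiv_right (m := (⊤ : ℕ∞)) (by simp)).differentiable (by simp)
  have key : ∀ w z : ℝ × ℝ, fderiv ℝ (fun p => fderiv ℝ F p w) q z
      = fderiv ℝ (fderiv ℝ F) q z w := by
    intro w z
    rw [fderiv_clm_apply (hd q) (differentiableAt_const w)]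
    simp
  rw [key, key]
  exact second_derivative_symmetric (fun y => ((hF.differentiable (by simp)) y).hasFDerivAt)
    (hd q).hasFDerivAt z w

/-- Identity for V[X(Φ,Ψ)] where X(Φ,Ψ) = UΦ − (ln v)(∂ₜΨ)², v = t+r, u = t−r.
The functions LΦ, LΨ stand for the spherical Laplacians Δ_{S²}Φ, Δ_{S²}Ψ at the
fixed angle and Q for Q₀(φ,φ); the hypotheses are the wave equations
UVΨ = r⁻²Δ_{S²}Ψ + rQ₀(φ,φ) and UVΦ = r⁻²Δ_{S²}Φ + r⁻¹(∂ₜΨ)². -/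
theorem stmt11 (Φ Ψ LΦ LΨ Q : ℝ → ℝ → ℝ)
    (hΦ : ContDiff ℝ (⊤ : ℕ∞) (fun p : ℝ × ℝ => Φ p.1 p.2))
    (hΨ : ContDiff ℝ (⊤ : ℕ∞) (fun p : ℝ × ℝ => Ψ p.1 p.2))
    (hwΨ : ∀ t r : ℝ, 0 < r →
      Uop (Vop Ψ) t r = (1 / r ^ 2) * LΨ t r + r * Q t r)
    (hwΦ : ∀ t r : ℝ, 0 < r →
      Uop (Vop Φ) t r = (1 / r ^ 2) * LΦ t r + (1 / r) * (PT Ψ t r) ^ 2) :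
    ∀ t r : ℝ, 0 < r → 0 < t + r →
      Vop (fun t r => Uop Φ t r - Real.log (t + r) * (PT Ψ t r) ^ 2) t r
        = ((t - r) / (r * (t + r))) * (PT Ψ t r) ^ 2
          - (Real.log (t + r) / r ^ 2) * (PT Ψ t r * LΨ t r)
          + (1 / r ^ 2) * LΦ t r
          - Real.log (t + r) * PT Ψ t r * (r * Q t r + Vop (Vop Ψ) t r) := by
  intro t r hr hv
  have hrne : r ≠ 0 := ne_of_gt hr
  have hvne : t + r ≠ 0 := ne_of_gt hv
  -- first order formulas
  have ePT : ∀ a b : ℝ, PT Ψ a b = fderiv ℝ (fun p : ℝ × ℝ => Ψ p.1 p.2) (a, b) (1, 0) :=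
    fun a b => (hasDerivAt_fst hΨ a b).deriv
  have ePRΨ : ∀ a b : ℝ, PR Ψ a b = fderiv ℝ (fun p : ℝ × ℝ => Ψ p.1 p.2) (a, b) (0, 1) :=
    fun a b => (hasDerivAt_snd hΨ a b).deriv
  have ePTΦ : ∀ a b : ℝ, PT Φ a b = fderiv ℝ (fun p : ℝ × ℝ => Φ p.1 p.2) (a, b) (1, 0) :=
    fun a b => (hasDerivAt_fst hΦ a b).deriv
  have ePRΦ : ∀ a b : ℝ, PR Φ a b = fderiv ℝ (fun p : ℝ × ℝ => Φ p.1 p.2) (a, b) (0, 1) :=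
    fun a b => (hasDerivAt_snd hΦ a b).deriv
  have e1m : ((1:ℝ), (-1:ℝ)) = ((1:ℝ), (0:ℝ)) - ((0:ℝ), (1:ℝ)) := by norm_num
  have e1p : ((1:ℝ), (1:ℝ)) = ((1:ℝ), (0:ℝ)) + ((0:ℝ), (1:ℝ)) := by norm_num
  have eUΦ : ∀ a b : ℝ, Uop Φ a b = fderiv ℝ (fun p : ℝ × ℝ => Φ p.1 p.2) (a, b) (1, -1) := by
    intro a b
    show PT Φ a b - PR Φ a b = _
    rw [e1m, map_sub, ePTΦ, ePRΦ]
  have eVΦ : ∀ a b : ℝ, Vop Φ a b = fderiv ℝ (fun p : ℝ × ℝ => Φ p.1 p.2) (a, b) (1, 1) := by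
    intro a b
    show PT Φ a b + PR Φ a b = _
    rw [e1p, map_add, ePTΦ, ePRΦ]
  have eVΨ : ∀ a b : ℝ, Vop Ψ a b = fderiv ℝ (fun p : ℝ × ℝ => Ψ p.1 p.2) (a, b) (1, 1) := by
    intro a b
    show PT Ψ a b + PR Ψ a b = _
    rw [e1p, map_add, ePT, ePRΨ]
  -- second order: Uop (Vop Φ)
  have hVΦ := smoothD hΦ ((1:ℝ), (1:ℝ))
  have hVΨ := smoothD hΨ ((1:ℝ), (1:ℝ))
  have eUVΦ : Uop (Vop Φ) t r
      = fderiv ℝ (fun p => fderiv ℝ (fun p : ℝ × ℝ => Φ p.1 p.2) p (1, 1)) (t, r) (1, -1) := by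
    have h1 : HasDerivAt (fun s => Vop Φ s r)
        (fderiv ℝ (fun p => fderiv ℝ (fun p : ℝ × ℝ => Φ p.1 p.2) p (1, 1)) (t, r) (1, 0)) t :=
      (hasDerivAt_fst hVΦ t r).congr_of_eventuallyEq (.of_forall fun s => eVΦ s r)
    have h2 : HasDerivAt (fun ρ => Vop Φ t ρ)
        (fderiv ℝ (fun p => fderiv ℝ (fun p : ℝ × ℝ => Φ p.1 p.2) p (1, 1)) (t, r) (0, 1)) r :=
      (hasDerivAt_snd hVΦ t r).congr_of_eventuallyEq (.of_forall fun ρ => eVΦ t ρ)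
    show deriv (fun s => Vop Φ s r) t - deriv (fun ρ => Vop Φ t ρ) r = _
    rw [h1.deriv, h2.deriv, e1m, map_sub]
  have eUVΨ : Uop (Vop Ψ) t r
      = fderiv ℝ (fun p => fderiv ℝ (fun p : ℝ × ℝ => Ψ p.1 p.2) p (1, 1)) (t, r) (1, -1) := by
    have h1 : HasDerivAt (fun s => Vop Ψ s r)
        (fderiv ℝ (fun p => fderiv ℝ (fun p : ℝ × ℝ => Ψ p.1 p.2) p (1, 1)) (t, r) (1, 0)) t :=
      (hasDerivAt_fst hVΨ t r).congr_of_eventuallyEq (.of_forall fun s => eVΨ s r)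
    have h2 : HasDerivAt (fun ρ => Vop Ψ t ρ)
        (fderiv ℝ (fun p => fderiv ℝ (fun p : ℝ × ℝ => Ψ p.1 p.2) p (1, 1)) (t, r) (0, 1)) r :=
      (hasDerivAt_snd hVΨ t r).congr_of_eventuallyEq (.of_forall fun ρ => eVΨ t ρ)
    show deriv (fun s => Vop Ψ s r) t - deriv (fun ρ => Vop Ψ t ρ) r = _
    rw [h1.deriv, h2.deriv, e1m, map_sub]
  have eVVΨ : Vop (Vop Ψ) t r
      = fderiv ℝ (fun p => fderiv ℝ (fun p : ℝ × ℝ => Ψ p.1 p.2) p (1, 1)) (t, r) (1, 1) := by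
    have h1 : HasDerivAt (fun s => Vop Ψ s r)
        (fderiv ℝ (fun p => fderiv ℝ (fun p : ℝ × ℝ => Ψ p.1 p.2) p (1, 1)) (t, r) (1, 0)) t :=
      (hasDerivAt_fst hVΨ t r).congr_of_eventuallyEq (.of_forall fun s => eVΨ s r)
    have h2 : HasDerivAt (fun ρ => Vop Ψ t ρ)
        (fderiv ℝ (fun p => fderiv ℝ (fun p : ℝ × ℝ => Ψ p.1 p.2) p (1, 1)) (t, r) (0, 1)) r :=
      (hasDerivAt_snd hVΨ t r).congr_of_eventuallyEq (.of_forall fun ρ => eVΨ t ρ)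
    show deriv (fun s => Vop Ψ s r) t + deriv (fun ρ => Vop Ψ t ρ) r = _
    rw [h1.deriv, h2.deriv, e1p, map_add]
  -- derivatives of the X components
  have hUΦsm := smoothD hΦ ((1:ℝ), (-1:ℝ))
  have hPTsm := smoothD hΨ ((1:ℝ), (0:ℝ))
  have hU1 : HasDerivAt (fun s => Uop Φ s r)
      (fderiv ℝ (fun p => fderiv ℝ (fun p : ℝ × ℝ => Φ p.1 p.2) p (1, -1)) (t, r) (1, 0)) t :=
    (hasDerivAt_fst hUΦsm t r).congr_of_eventuallyEq (.of_forall fun s => eUΦ s r)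
  have hU2 : HasDerivAt (fun ρ => Uop Φ t ρ)
      (fderiv ℝ (fun p => fderiv ℝ (fun p : ℝ × ℝ => Φ p.1 p.2) p (1, -1)) (t, r) (0, 1)) r :=
    (hasDerivAt_snd hUΦsm t r).congr_of_eventuallyEq (.of_forall fun ρ => eUΦ t ρ)
  have hP1 : HasDerivAt (fun s => PT Ψ s r)
      (fderiv ℝ (fun p => fderiv ℝ (fun p : ℝ × ℝ => Ψ p.1 p.2) p (1, 0)) (t, r) (1, 0)) t :=
    (hasDerivAt_fst hPTsm t r).congr_of_eventuallyEq (.of_forall fun s => ePT s r)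
  have hP2 : HasDerivAt (fun ρ => PT Ψ t ρ)
      (fderiv ℝ (fun p => fderiv ℝ (fun p : ℝ × ℝ => Ψ p.1 p.2) p (1, 0)) (t, r) (0, 1)) r :=
    (hasDerivAt_snd hPTsm t r).congr_of_eventuallyEq (.of_forall fun ρ => ePT t ρ)
  have hlog1 : HasDerivAt (fun s => Real.log (s + r)) ((t + r)⁻¹ * 1) t :=
    HasDerivAt.comp (h₂ := Real.log) t (Real.hasDerivAt_log hvne) ((hasDerivAt_id t).add_const r)
  have hlog2 : HasDerivAt (fun ρ => Real.log (t + ρ)) ((t + r)⁻¹ * 1) r :=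
    (Real.hasDerivAt_log hvne).comp r ((hasDerivAt_id r).const_add t)
  have hX1 := hU1.sub (hlog1.mul (hP1.pow 2))
  have hX2 := hU2.sub (hlog2.mul (hP2.pow 2))
  show deriv (fun s => Uop Φ s r - Real.log (s + r) * PT Ψ s r ^ 2) t
      + deriv (fun ρ => Uop Φ t ρ - Real.log (t + ρ) * PT Ψ t ρ ^ 2) r = _
  rw [HasDerivAt.deriv (f := fun s => Uop Φ s r - Real.log (s + r) * PT Ψ s r ^ 2) hX1,
    HasDerivAt.deriv (f := fun ρ => Uop Φ t ρ - Real.log (t + ρ) * PT Ψ t ρ ^ 2) hX2]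
  simp only [Pi.pow_apply]
  -- abbreviations
  set a := PT Ψ t r with ha
  set c := Vop (Vop Ψ) t r with hc
  set T1 := fderiv ℝ (fun p => fderiv ℝ (fun p : ℝ × ℝ => Φ p.1 p.2) p (1, -1)) (t, r) ((1:ℝ), (0:ℝ)) with hT1
  set T2 := fderiv ℝ (fun p => fderiv ℝ (fun p : ℝ × ℝ => Φ p.1 p.2) p (1, -1)) (t, r) ((0:ℝ), (1:ℝ)) with hT2
  set S1 := fderiv ℝ (fun p => fderiv ℝ (fun p : ℝ × ℝ => Ψ p.1 p.2) p (1, 0)) (t, r) ((1:ℝ), (0:ℝ)) with hS1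
  set S2 := fderiv ℝ (fun p => fderiv ℝ (fun p : ℝ × ℝ => Ψ p.1 p.2) p (1, 0)) (t, r) ((0:ℝ), (1:ℝ)) with hS2
  -- key identity for Φ
  have hTsum : T1 + T2 = 1 / r ^ 2 * LΦ t r + 1 / r * a ^ 2 := by
    rw [hT1, hT2, ← map_add, ← e1p, Hsym hΦ (t, r) (1, -1) (1, 1), ← eUVΦ]
    exact hwΦ t r hr
  -- key identity for Ψ
  have hSsum : 2 * (S1 + S2) = c + (1 / r ^ 2 * LΨ t r + r * Q t r) := by
    rw [hS1, hS2, ← map_add, ← e1p, Hsym hΨ (t, r) (1, 0) (1, 1)]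
    have h2e : ((1:ℝ), (1:ℝ)) + ((1:ℝ), (-1:ℝ)) = (2:ℝ) • ((1:ℝ), (0:ℝ)) := by
      norm_num [Prod.ext_iff]
    have := congrArg
      (fderiv ℝ (fun p => fderiv ℝ (fun p : ℝ × ℝ => Ψ p.1 p.2) p (1, 1)) (t, r)) h2e
    rw [map_add, map_smul, smul_eq_mul] at this
    rw [← this, ← eVVΨ, ← eUVΨ, hwΨ t r hr]
  have hT2' : T2 = 1 / r ^ 2 * LΦ t r + 1 / r * a ^ 2 - T1 := by linarith
  have hS2' : S2 = (c + (1 / r ^ 2 * LΨ t r + r * Q t r)) / 2 - S1 := by linarith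
  rw [hT2', hS2']
  field_simp
  ring
end
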